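/- arXiv:1605.06493 — 2 statements merged into one kernel-verified Lean document; each statement's English description precedes it below -/
import Mathlib

section
/- Let M ∈ SL₂(ℤ) be hyperbolic with λ_M > 1, and let |y|_M := ‖y⁺‖ − ‖y⁻‖ for the decomposition along the eigenspaces of M*. Let ε > 0, κ ≥ 0, and let R : ℝ² → ℝ_{≥0} satisfy R(z) ≤ κ‖z‖ whenever ‖z‖ < ε. Then there exists c_M > 0 such that for all κ < c_M there exist constants c₁ > c₂ > 0 such that for all n₁, n₂ ∈ ℤ² there exists y = y_{n₁,n₂} ∈ ℝ² with ‖y‖ < ε (independent of R) satisfying −c₁(|n₁|_M − |n₂|_M) − (n₂ᵀM − n₁ᵀ)y + ‖n₂‖ R(y) ≤ −c₂(‖n₁‖ + ‖n₂‖). -/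
open Matrix

noncomputable def e2 (y : Fin 2 → ℝ) : ℝ := Real.sqrt (∑ i, y i ^ 2)

open scoped InnerProductSpace

/-!
Put `v = M* n₂ - n₁`. The eigenprojections are polynomials in `M*`, so `v⁺ = μ₊ n₂⁺ - n₁⁺` and
`v⁻ = μ₋ n₂⁻ - n₁⁻`, whence `‖v^±‖ ≥ |λ^{±1} ‖n₂^±‖ - ‖n₁^±‖|` by the reverse triangle inequality.
The point `y = δ v / ‖v‖` with `δ = ε / 2` turns the pairing into `δ ‖v‖ ≥ (δ / C) (‖v⁺‖ + ‖v⁻‖)`,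
where `C` bounds the projections. What remains splits into two one-variable piecewise linear
estimates, along the expanding and the contracting direction, both valid once `c₂ / c₁` and `κ C`
are small compared with `(λ - 1) / λ`.
-/

section EigenDecomposition

variable {K V : Type*} [Field K] [AddCommGroup V] [Module K V] {f p m : V →ₗ[K] V} {μp μm : K}

theorem apply_map_eq_smul_of_eigendecomposition (hpm : ∀ y, p y + m y = y)
    (hp : ∀ y, f (p y) = μp • p y) (hm : ∀ y, f (m y) = μm • m y) (hne : μp ≠ μm) (x : V) :
    p (f x) = μp • p x := by
  -- `p` is a polynomial in `f`, hence commutes with it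
  have hpf : ∀ y, (μp - μm) • p y = f y - μm • y := fun y => by
    conv_rhs => rw [← hpm y, map_add, hp, hm]
    module
  apply smul_right_injective V (sub_ne_zero.2 hne)
  calc (μp - μm) • p (f x) = f (f x - μm • x) := by rw [hpf, map_sub, map_smul]
    _ = (μp - μm) • μp • p x := by rw [← hpf, map_smul, hp]

end EigenDecomposition

theorem expanding_estimate {lam k s a₁ a₂ : ℝ} (hlam : 0 < lam) (hk : 0 ≤ k) (hs : 0 ≤ s)
    (hks : k * (lam + 1) + s ≤ (lam - 1) / 2) (ha₂ : 0 ≤ a₂) :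
    (a₂ - a₁) / 2 + k * (a₁ + a₂) + s * a₂ ≤ |lam * a₂ - a₁| := by
  have hk' : k ≤ 1 / 2 := by nlinarith
  rcases le_total a₁ (lam * a₂) with h | h
  · rw [abs_of_nonneg (by linarith)]
    nlinarith [mul_le_mul_of_nonneg_right hks ha₂,
      mul_nonneg (sub_nonneg.2 h) (by linarith : 0 ≤ 1 / 2 + k)]
  · rw [abs_of_nonpos (by linarith)]
    nlinarith [mul_le_mul_of_nonneg_right hks ha₂,
      mul_nonneg (sub_nonneg.2 h) (by linarith : 0 ≤ 3 / 2 - k)]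

theorem contracting_estimate {lam k s b₁ b₂ : ℝ} (hlam : 0 < lam) (hk : 0 ≤ k) (hs : 0 ≤ s)
    (hks : k * (lam + 1) + s * lam ≤ (lam - 1) / 2) (hb₂ : 0 ≤ b₂) :
    (b₁ - b₂) / 2 + k * (b₁ + b₂) + s * b₂ ≤ |lam⁻¹ * b₂ - b₁| := by
  have hk' : k ≤ 1 / 2 := by nlinarith
  have habs : |lam⁻¹ * b₂ - b₁| = |b₂ - lam * b₁| / lam := by
    rw [← abs_of_pos hlam, ← abs_div, abs_of_pos hlam]; congr 1; field_simp
  rw [habs, le_div_iff₀ hlam]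
  rcases le_total (lam * b₁) b₂ with h | h
  · rw [abs_of_nonneg (by linarith)]
    nlinarith [mul_le_mul_of_nonneg_right hks hb₂,
      mul_nonneg (sub_nonneg.2 h) (by linarith : 0 ≤ 3 / 2 + k)]
  · rw [abs_of_nonpos (by linarith)]
    nlinarith [mul_le_mul_of_nonneg_right hks hb₂,
      mul_nonneg (sub_nonneg.2 h) (by linarith : 0 ≤ 1 / 2 - k),
      mul_nonneg (mul_nonneg hb₂ hlam.le) hs]

section InnerProductSpace

variable {E : Type*} [NormedAddCommGroup E] [InnerProductSpace ℝ E]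

theorem exists_norm_add_norm_le [FiniteDimensional ℝ E] (p m : E →ₗ[ℝ] E) :
    ∃ C > 0, ∀ x, ‖p x‖ + ‖m x‖ ≤ C * ‖x‖ := by
  refine ⟨‖LinearMap.toContinuousLinearMap p‖ + ‖LinearMap.toContinuousLinearMap m‖ + 1,
    by positivity, fun x => ?_⟩
  have hp := (LinearMap.toContinuousLinearMap p).le_opNorm x
  have hm := (LinearMap.toContinuousLinearMap m).le_opNorm x
  simp only [LinearMap.coe_toContinuousLinearMap'] at hp hm
  nlinarith [norm_nonneg x]

theorem norm_div_norm_smul_self_le (v : E) {δ : ℝ} (hδ : 0 ≤ δ) : ‖(δ / ‖v‖) • v‖ ≤ δ := by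
  rcases eq_or_ne ‖v‖ 0 with hv | hv
  · simp [hv, hδ]
  · rw [norm_smul, Real.norm_of_nonneg (by positivity), div_mul_cancel₀ _ hv]

theorem inner_div_norm_smul_self (v : E) (δ : ℝ) : ⟪v, (δ / ‖v‖) • v⟫_ℝ = δ * ‖v‖ := by
  rw [real_inner_smul_right, real_inner_self_eq_norm_sq]
  rcases eq_or_ne ‖v‖ 0 with hv | hv
  · simp [hv]
  · field_simp

variable {f p m : E →ₗ[ℝ] E} {lam μp μm : ℝ}

theorem abs_sub_add_abs_sub_le_mul_norm_sub (hlam : 1 < lam) (hμp : |μp| = lam)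
    (hμm : |μm| = lam⁻¹) (hpm : ∀ y, p y + m y = y) (hp : ∀ y, f (p y) = μp • p y)
    (hm : ∀ y, f (m y) = μm • m y) {C : ℝ} (hC : ∀ x, ‖p x‖ + ‖m x‖ ≤ C * ‖x‖) (n₁ n₂ : E) :
    |lam * ‖p n₂‖ - ‖p n₁‖| + |lam⁻¹ * ‖m n₂‖ - ‖m n₁‖| ≤ C * ‖f n₂ - n₁‖ := by
  have hne : μp ≠ μm := fun h => ((inv_lt_one_of_one_lt₀ hlam).trans hlam).ne <| by
    rw [← hμm, ← h, hμp]
  have hpv : p (f n₂ - n₁) = μp • p n₂ - p n₁ := by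
    rw [map_sub, apply_map_eq_smul_of_eigendecomposition hpm hp hm hne]
  have hmv : m (f n₂ - n₁) = μm • m n₂ - m n₁ := by
    rw [map_sub, apply_map_eq_smul_of_eigendecomposition (fun y => (add_comm _ _).trans (hpm y))
      hm hp hne.symm]
  have hWp : |lam * ‖p n₂‖ - ‖p n₁‖| ≤ ‖p (f n₂ - n₁)‖ := by
    simpa [hpv, norm_smul, hμp] using abs_norm_sub_norm_le (μp • p n₂) (p n₁)
  have hWm : |lam⁻¹ * ‖m n₂‖ - ‖m n₁‖| ≤ ‖m (f n₂ - n₁)‖ := by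
    simpa [hmv, norm_smul, hμm] using abs_norm_sub_norm_le (μm • m n₂) (m n₁)
  exact (add_le_add hWp hWm).trans (hC _)

theorem directional_estimate (hlam : 1 < lam) (hμp : |μp| = lam) (hμm : |μm| = lam⁻¹)
    (hpm : ∀ y, p y + m y = y) (hp : ∀ y, f (p y) = μp • p y) (hm : ∀ y, f (m y) = μm • m y)
    {C δ κ : ℝ} (hC : ∀ x, ‖p x‖ + ‖m x‖ ≤ C * ‖x‖) (hC0 : 0 < C) (hδ : 0 ≤ δ) (hκ : 0 ≤ κ)
    (hκC : κ * C ≤ (lam - 1) / (4 * lam)) (n₁ n₂ : E) :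
    -(δ / C / 2) * ((‖p n₁‖ - ‖m n₁‖) - (‖p n₂‖ - ‖m n₂‖)) - δ * ‖f n₂ - n₁‖ + ‖n₂‖ * (κ * δ)
      ≤ -(δ / C * ((lam - 1) / (4 * (lam + 1)))) * (‖n₁‖ + ‖n₂‖) := by
  have hk : (lam - 1) / (4 * (lam + 1)) * (lam + 1) = (lam - 1) / 4 := by field_simp
  have hk0 : 0 ≤ (lam - 1) / (4 * (lam + 1)) := div_nonneg (by linarith) (by positivity)
  have hs0 : 0 ≤ κ * C := by positivity
  have hsl : κ * C * lam ≤ (lam - 1) / 4 := by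
    rw [le_div_iff₀ (by positivity)] at hκC
    linarith
  have hA := expanding_estimate (a₁ := ‖p n₁‖) (by positivity) hk0 hs0 (by nlinarith)
    (norm_nonneg (p n₂))
  have hB := contracting_estimate (b₁ := ‖m n₁‖) (by positivity) hk0 hs0 (by nlinarith)
    (norm_nonneg (m n₂))
  have hσ : 0 ≤ δ / C := div_nonneg hδ hC0.le
  have key := mul_le_mul_of_nonneg_left ((add_le_add hA hB).trans
    (abs_sub_add_abs_sub_le_mul_norm_sub hlam hμp hμm hpm hp hm hC n₁ n₂)) hσ
  rw [← mul_assoc, div_mul_cancel₀ _ hC0.ne'] at key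
  have hn : ∀ x, ‖x‖ ≤ ‖p x‖ + ‖m x‖ := fun x => by simpa [hpm] using norm_add_le (p x) (m x)
  have hn₁ := mul_le_mul_of_nonneg_left (hn n₁) (mul_nonneg hσ hk0)
  have hn₂ := mul_le_mul_of_nonneg_left (hn n₂) (mul_nonneg hσ hk0)
  have hR := mul_le_mul_of_nonneg_right (hn n₂) (mul_nonneg hκ hδ)
  have hκδ : κ * δ = δ / C * (κ * C) := by field_simp
  rw [hκδ] at hR ⊢
  linarith

theorem exists_directional_inequality [FiniteDimensional ℝ E] (hlam : 1 < lam)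
    (hμp : |μp| = lam) (hμm : |μm| = lam⁻¹) (hpm : ∀ y, p y + m y = y)
    (hp : ∀ y, f (p y) = μp • p y) (hm : ∀ y, f (m y) = μm • m y) {ε : ℝ} (hε : 0 < ε) :
    ∃ cM > (0 : ℝ), ∀ κ : ℝ, 0 ≤ κ → κ < cM →
      ∃ c₁ c₂ : ℝ, 0 < c₂ ∧ c₂ < c₁ ∧ ∀ n₁ n₂ : E, ∃ y : E, ‖y‖ < ε ∧
        -c₁ * ((‖p n₁‖ - ‖m n₁‖) - (‖p n₂‖ - ‖m n₂‖)) - ⟪f n₂ - n₁, y⟫_ℝ + ‖n₂‖ * (κ * ‖y‖)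
          ≤ -c₂ * (‖n₁‖ + ‖n₂‖) := by
  obtain ⟨C, hC0, hC⟩ := exists_norm_add_norm_le p m
  refine ⟨(lam - 1) / (4 * lam) / C, by positivity, fun κ hκ hκC => ?_⟩
  refine ⟨ε / 2 / C / 2, ε / 2 / C * ((lam - 1) / (4 * (lam + 1))), by positivity, ?_,
    fun n₁ n₂ => ⟨(ε / 2 / ‖f n₂ - n₁‖) • (f n₂ - n₁), ?_, ?_⟩⟩
  · have hk : (lam - 1) / (4 * (lam + 1)) < 1 / 2 := by
      rw [div_lt_iff₀ (by positivity)]; linarith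
    have := mul_lt_mul_of_pos_left hk (by positivity : 0 < ε / 2 / C)
    linarith
  · exact (norm_div_norm_smul_self_le _ (by positivity)).trans_lt (half_lt_self hε)
  · rw [inner_div_norm_smul_self]
    refine le_trans ?_ (directional_estimate hlam hμp hμm hpm hp hm hC hC0 (by positivity) hκ
      ((lt_div_iff₀ hC0).1 hκC).le n₁ n₂)
    gcongr
    exact norm_div_norm_smul_self_le _ (by positivity)

end InnerProductSpace

theorem e2_eq_norm (y : Fin 2 → ℝ) : e2 y = ‖WithLp.toLp 2 y‖ := by
  simp [e2, EuclideanSpace.norm_eq]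

theorem sum_mul_eq_inner_toLp {ι : Type*} [Fintype ι] (v y : ι → ℝ) :
    ∑ i, v i * y i = ⟪WithLp.toLp 2 v, WithLp.toLp 2 y⟫_ℝ := by
  rw [EuclideanSpace.inner_toLp_toLp, star_trivial, dotProduct_comm]
  rfl

theorem WithLp.linearEquiv_symm_conj_toLp {K V : Type*} [CommSemiring K] [AddCommGroup V]
    [Module K V] (r : ENNReal) (q : V →ₗ[K] V) (x : V) :
    (WithLp.linearEquiv r K V).symm.conj q (WithLp.toLp r x) = WithLp.toLp r (q x) :=
  rfl

theorem directional_inequality_general (M : Matrix (Fin 2) (Fin 2) ℤ)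
    (lam μp μm : ℝ) (hlam : 1 < lam) (hμp : |μp| = lam) (hμm : |μm| = lam⁻¹)
    (p m : (Fin 2 → ℝ) →ₗ[ℝ] (Fin 2 → ℝ))
    (hpm : ∀ y, p y + m y = y)
    (heigp : ∀ y, (M.map (Int.cast : ℤ → ℝ))ᵀ *ᵥ (p y) = μp • p y)
    (heigm : ∀ y, (M.map (Int.cast : ℤ → ℝ))ᵀ *ᵥ (m y) = μm • m y)
    (ε : ℝ) (hε : 0 < ε) :
    ∃ cM > (0 : ℝ), ∀ κ : ℝ, 0 ≤ κ → κ < cM →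
      ∃ c₁ c₂ : ℝ, 0 < c₂ ∧ c₂ < c₁ ∧
        ∀ n₁ n₂ : Fin 2 → ℤ, ∃ y : Fin 2 → ℝ, e2 y < ε ∧
          ∀ R : (Fin 2 → ℝ) → ℝ, (∀ z, 0 ≤ R z) →
            (∀ z, e2 z < ε → R z ≤ κ * e2 z) →
            -c₁ * ((e2 (p fun i => (n₁ i : ℝ)) - e2 (m fun i => (n₁ i : ℝ))) -
                (e2 (p fun i => (n₂ i : ℝ)) - e2 (m fun i => (n₂ i : ℝ)))) -
              (∑ i, ((M.map (Int.cast : ℤ → ℝ))ᵀ *ᵥ (fun i => (n₂ i : ℝ)) -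
                  fun i => (n₁ i : ℝ)) i * y i) +
              e2 (fun i => (n₂ i : ℝ)) * R y ≤
            -c₂ * (e2 (fun i => (n₁ i : ℝ)) + e2 (fun i => (n₂ i : ℝ))) := by
  let e := (WithLp.linearEquiv 2 ℝ (Fin 2 → ℝ)).symm
  obtain ⟨cM, hcM, h⟩ :=
    exists_directional_inequality (f := e.conj (M.map Int.cast)ᵀ.mulVecLin) (p := e.conj p)
      (m := e.conj m) hlam hμp hμm (fun y => congrArg _ (hpm y.ofLp))
      (fun y => congrArg _ (heigp y.ofLp)) (fun y => congrArg _ (heigm y.ofLp)) hε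
  refine ⟨cM, hcM, fun κ hκ hκM => ?_⟩
  obtain ⟨c₁, c₂, hc₂, hc₁₂, h⟩ := h κ hκ hκM
  refine ⟨c₁, c₂, hc₂, hc₁₂, fun n₁ n₂ => ?_⟩
  obtain ⟨y, hyε, hy⟩ :=
    h (WithLp.toLp 2 fun i => (n₁ i : ℝ)) (WithLp.toLp 2 fun i => (n₂ i : ℝ))
  refine ⟨y.ofLp, by rwa [e2_eq_norm], fun R _ hR => ?_⟩
  have hRy := mul_le_mul_of_nonneg_left (hR _ (by rwa [e2_eq_norm]))
    (by rw [e2_eq_norm]; positivity : 0 ≤ e2 fun i => (n₂ i : ℝ))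
  rw [sum_mul_eq_inner_toLp, WithLp.toLp_ofLp]
  simp only [e2_eq_norm, WithLp.toLp_ofLp] at hRy ⊢
  simp only [e, WithLp.linearEquiv_symm_conj_toLp, mulVecLin_apply, ← WithLp.toLp_sub] at hy
  linarith

/-- Directional inequality: for hyperbolic `M ∈ SL₂(ℤ)`, with
`|y|_M = ‖y⁺‖ − ‖y⁻‖` (decomposition via the projections `p`, `m` onto the eigenspaces of
`M*`), and any `R : ℝ² → ℝ_{≥0}` with `R(z) ≤ κ‖z‖` for `‖z‖ < ε`: there is `c_M > 0`
such that for all `0 ≤ κ < c_M` there are `c₁ > c₂ > 0` such that for all `n₁, n₂ ∈ ℤ²`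
there is `y` with `‖y‖ < ε`, independent of `R`, satisfying
`−c₁(|n₁|_M − |n₂|_M) − (n₂ᵀM − n₁ᵀ)y + ‖n₂‖ R(y) ≤ −c₂(‖n₁‖ + ‖n₂‖)`. -/
theorem directional_inequality (M : Matrix (Fin 2) (Fin 2) ℤ) (hdet : M.det = 1)
    (lam μp μm : ℝ) (hlam : 1 < lam) (hμp : |μp| = lam) (hμm : |μm| = lam⁻¹)
    (p m : (Fin 2 → ℝ) →ₗ[ℝ] (Fin 2 → ℝ))
    (hpm : ∀ y, p y + m y = y)
    (heigp : ∀ y, (M.map (Int.cast : ℤ → ℝ))ᵀ *ᵥ (p y) = μp • p y)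
    (heigm : ∀ y, (M.map (Int.cast : ℤ → ℝ))ᵀ *ᵥ (m y) = μm • m y)
    (ε : ℝ) (hε : 0 < ε) :
    ∃ cM > (0 : ℝ), ∀ κ : ℝ, 0 ≤ κ → κ < cM →
      ∃ c₁ c₂ : ℝ, 0 < c₂ ∧ c₂ < c₁ ∧
        ∀ n₁ n₂ : Fin 2 → ℤ, ∃ y : Fin 2 → ℝ, e2 y < ε ∧
          ∀ R : (Fin 2 → ℝ) → ℝ, (∀ z, 0 ≤ R z) →
            (∀ z, e2 z < ε → R z ≤ κ * e2 z) →
            -c₁ * ((e2 (p fun i => (n₁ i : ℝ)) - e2 (m fun i => (n₁ i : ℝ))) -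
                (e2 (p fun i => (n₂ i : ℝ)) - e2 (m fun i => (n₂ i : ℝ)))) -
              (∑ i, ((M.map (Int.cast : ℤ → ℝ))ᵀ *ᵥ (fun i => (n₂ i : ℝ)) -
                  fun i => (n₁ i : ℝ)) i * y i) +
              e2 (fun i => (n₂ i : ℝ)) * R y ≤
            -c₂ * (e2 (fun i => (n₁ i : ℝ)) + e2 (fun i => (n₂ i : ℝ))) :=
  directional_inequality_general M lam μp μm hlam hμp hμm p m hpm heigp heigm ε hε
end

section
/- Let M ∈ SL₂(ℤ) be hyperbolic with fixed-point set Fix(M) ⊂ T² of cardinality N_M = |det(I−M)|. Define the linear functional B_M(ψ) = N_M⁻¹ Σ_{Mx=x} tr((I−M)⁻¹ Dψ(x)) on the Banach space ℬ_r of Z²-periodic maps ψ : T² → ℝ² extending holomorphically and boundedly to A_r (with sup norm). Then the set 𝒢 = B_M⁻¹(ℝ \ {0}) is open and dense in ℬ_r; in particular B_M is a nonzero continuous linear functional. -/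
open Matrix

def strip (r : ℝ) : Set (Fin 2 → ℂ) := {z | ∀ i, |(z i).im| < r}

/-- The real part of a complexified perturbation, as a map `ℝ² → ℝ²`. -/
noncomputable def reLift (ψ : (Fin 2 → ℂ) → (Fin 2 → ℂ)) : (Fin 2 → ℝ) → (Fin 2 → ℝ) :=
  fun x i => (ψ (fun j => (x j : ℂ)) i).re

/-- The Jacobian matrix at a point. -/
noncomputable def Jac (ψ : (Fin 2 → ℝ) → (Fin 2 → ℝ)) (x : Fin 2 → ℝ) :
    Matrix (Fin 2) (Fin 2) ℝ :=
  Matrix.of fun i j => fderiv ℝ ψ x (Pi.single j 1) i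

/-- The Banach space `ℬ_r` of `ℤ²`-periodic real-on-real perturbations extending
holomorphically and boundedly to the strip `A_r` (as a set of lifts). -/
def pertSpace (r : ℝ) : Set ((Fin 2 → ℂ) → (Fin 2 → ℂ)) :=
  {ψ | DifferentiableOn ℂ ψ (strip r) ∧
    (∃ B : ℝ, ∀ z ∈ strip r, ‖ψ z‖ ≤ B) ∧
    (∀ z : Fin 2 → ℂ, ∀ k : Fin 2 → ℤ, ψ (z + fun i => (k i : ℂ)) = ψ z) ∧
    ∀ x : Fin 2 → ℝ, ∀ i, (ψ (fun j => (x j : ℂ)) i).im = 0}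

/-- The fixed-point set of the hyperbolic toral automorphism `M` on `T²`, in the
fundamental domain `[0,1)²`. -/
def fixSet (M : Matrix (Fin 2) (Fin 2) ℤ) : Set (Fin 2 → ℝ) :=
  {x | (∀ i, x i ∈ Set.Ico (0 : ℝ) 1) ∧
    ∀ i, ∃ k : ℤ, ((M.map (Int.cast : ℤ → ℝ)) *ᵥ x) i - x i = (k : ℝ)}

/-- The linear functional `B_M(ψ) = N_M⁻¹ Σ_{Mx=x} tr((I−M)⁻¹ Dψ(x))`. -/
noncomputable def BM (M : Matrix (Fin 2) (Fin 2) ℤ) (ψ : (Fin 2 → ℂ) → (Fin 2 → ℂ)) : ℝ :=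
  ((1 - M).det.natAbs : ℝ)⁻¹ *
    ∑ᶠ x ∈ fixSet M,
      (((1 : Matrix (Fin 2) (Fin 2) ℝ) - M.map (Int.cast : ℤ → ℝ))⁻¹ * Jac (reLift ψ) x).trace

/-!
`B_M` is linear because the Jacobian is, and bounded because the sup-ball of radius `r` about a
real point lies in `A_r`, so the Cauchy (Schwarz) estimate bounds `Dψ` there by `2‖ψ‖/r`.
For nonvanishing take `ψ₀(z) = sin(2π d z₀) (1 - M) e₀` with `d = det(1 - M)`: then
`tr((1 - M)⁻¹ Dψ₀(x)) = 2π d cos(2π d x₀)`, and Cramer's rule gives `d x₀ ∈ ℤ` at every fixed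
point, so every fixed point contributes `2π d ≠ 0`. Openness of `𝒢` is continuity; density follows
by adding small multiples of `ψ₀` to any `ψ` with `B_M ψ = 0`.
-/

open Metric

lemma isOpen_strip (r : ℝ) : IsOpen (strip r) := by
  have : strip r = ⋂ i : Fin 2, (fun z : Fin 2 → ℂ => (z i).im) ⁻¹' Set.Ioo (-r) r := by
    ext z
    simp [strip, abs_lt]
  rw [this]
  exact isOpen_iInter_of_finite fun i => isOpen_Ioo.preimage (by fun_prop)

noncomputable def ofRealPi : (Fin 2 → ℝ) →L[ℝ] (Fin 2 → ℂ) :=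
  ContinuousLinearMap.pi fun i => Complex.ofRealCLM.comp (ContinuousLinearMap.proj i)

noncomputable def rePi : (Fin 2 → ℂ) →L[ℝ] (Fin 2 → ℝ) :=
  ContinuousLinearMap.pi fun i => Complex.reCLM.comp (ContinuousLinearMap.proj i)

@[simp]
lemma ofRealPi_apply (x : Fin 2 → ℝ) (i : Fin 2) : ofRealPi x i = x i := rfl

@[simp]
lemma rePi_apply (z : Fin 2 → ℂ) (i : Fin 2) : rePi z i = (z i).re := rfl

lemma ball_ofRealPi_subset_strip (r : ℝ) (x : Fin 2 → ℝ) : ball (ofRealPi x) r ⊆ strip r := by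
  intro z hz i
  have h : |(z i - ofRealPi x i).im| < r := (Complex.abs_im_le_norm _).trans_lt
    ((norm_le_pi_norm (z - ofRealPi x) i).trans_lt (mem_ball_iff_norm.mp hz))
  simpa using h

lemma ofRealPi_mem_strip {r : ℝ} (hr : 0 < r) (x : Fin 2 → ℝ) : ofRealPi x ∈ strip r :=
  ball_ofRealPi_subset_strip r x (mem_ball_self hr)

lemma DifferentiableOn.differentiableAt_ofRealPi {r : ℝ} (hr : 0 < r)
    {ψ : (Fin 2 → ℂ) → (Fin 2 → ℂ)} (hψ : DifferentiableOn ℂ ψ (strip r)) (x : Fin 2 → ℝ) :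
    DifferentiableAt ℂ ψ (ofRealPi x) :=
  hψ.differentiableAt ((isOpen_strip r).mem_nhds (ofRealPi_mem_strip hr x))

lemma norm_fderiv_ofRealPi_le {r δ : ℝ} (hr : 0 < r) {φ : (Fin 2 → ℂ) → (Fin 2 → ℂ)}
    (hφ : DifferentiableOn ℂ φ (strip r)) (hb : ∀ z ∈ strip r, ‖φ z‖ ≤ δ) (x : Fin 2 → ℝ) :
    ‖fderiv ℂ φ (ofRealPi x)‖ ≤ 2 * δ / r := by
  have hball := ball_ofRealPi_subset_strip r x
  refine Complex.norm_fderiv_le_div_of_mapsTo_ball (hφ.mono hball) (fun z hz => ?_) hr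
  rw [mem_closedBall, dist_eq_norm]
  linarith [norm_sub_le (φ z) (φ (ofRealPi x)), hb z (hball hz),
    hb _ (ofRealPi_mem_strip hr x)]

lemma hasFDerivAt_reLift {ψ : (Fin 2 → ℂ) → (Fin 2 → ℂ)} {x : Fin 2 → ℝ}
    (hψ : DifferentiableAt ℂ ψ (ofRealPi x)) :
    HasFDerivAt (reLift ψ) (rePi ∘L (fderiv ℂ ψ (ofRealPi x)).restrictScalars ℝ ∘L ofRealPi) x :=
  rePi.hasFDerivAt.comp x ((hψ.hasFDerivAt.restrictScalars ℝ).comp x ofRealPi.hasFDerivAt)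

lemma Jac_reLift_apply {ψ : (Fin 2 → ℂ) → (Fin 2 → ℂ)} {x : Fin 2 → ℝ}
    (hψ : DifferentiableAt ℂ ψ (ofRealPi x)) (i j : Fin 2) :
    Jac (reLift ψ) x i j = (fderiv ℂ ψ (ofRealPi x) (Pi.single j 1) i).re := by
  have : ofRealPi (Pi.single j 1) = Pi.single j 1 := by
    ext k
    by_cases h : k = j <;> simp [h]
  simp [Jac, (hasFDerivAt_reLift hψ).fderiv, this]

lemma abs_Jac_reLift_le {ψ : (Fin 2 → ℂ) → (Fin 2 → ℂ)} {x : Fin 2 → ℝ}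
    (hψ : DifferentiableAt ℂ ψ (ofRealPi x)) (i j : Fin 2) :
    |Jac (reLift ψ) x i j| ≤ ‖fderiv ℂ ψ (ofRealPi x)‖ := by
  rw [Jac_reLift_apply hψ]
  calc _ ≤ ‖fderiv ℂ ψ (ofRealPi x) (Pi.single j 1) i‖ := Complex.abs_re_le_norm _
    _ ≤ ‖fderiv ℂ ψ (ofRealPi x) (Pi.single j 1)‖ := norm_le_pi_norm _ i
    _ ≤ ‖fderiv ℂ ψ (ofRealPi x)‖ * ‖(Pi.single j 1 : Fin 2 → ℂ)‖ :=
        (fderiv ℂ ψ (ofRealPi x)).le_opNorm _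
    _ = ‖fderiv ℂ ψ (ofRealPi x)‖ := by simp [Pi.norm_single]

lemma abs_trace_mul_le {n : Type*} [Fintype n] (B J : Matrix n n ℝ) {b : ℝ}
    (hJ : ∀ i j, |J i j| ≤ b) : |(B * J).trace| ≤ (∑ i, ∑ j, |B i j|) * b := by
  simp only [trace, diag, mul_apply, Finset.sum_mul]
  refine (Finset.abs_sum_le_sum_abs _ _).trans (Finset.sum_le_sum fun i _ => ?_)
  refine (Finset.abs_sum_le_sum_abs _ _).trans (Finset.sum_le_sum fun j _ => ?_)
  rw [abs_mul]
  exact mul_le_mul_of_nonneg_left (hJ j i) (abs_nonneg _)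

lemma intCast_det {n : Type*} [Fintype n] [DecidableEq n] (B : Matrix n n ℤ) :
    ((B.det : ℤ) : ℝ) = (B.map (Int.cast : ℤ → ℝ)).det := by
  simpa using (Int.castRingHom ℝ).map_det B

lemma exists_int_det_mul_of_mulVec_int {n : Type*} [Fintype n] [DecidableEq n]
    (B : Matrix n n ℤ) {x : n → ℝ} (hx : ∀ i, ∃ k : ℤ, (B.map (Int.cast : ℤ → ℝ) *ᵥ x) i = k)
    (i : n) : ∃ m : ℤ, (B.det : ℝ) * x i = m := by
  choose k hk using hx
  have hadj : (B.map (Int.cast : ℤ → ℝ)).adjugate = B.adjugate.map Int.cast := by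
    simpa using ((Int.castRingHom ℝ).map_adjugate B).symm
  refine ⟨(B.adjugate *ᵥ k) i, ?_⟩
  calc (B.det : ℝ) * x i = ((B.map Int.cast).adjugate *ᵥ (B.map Int.cast *ᵥ x)) i := by
        rw [mulVec_mulVec, adjugate_mul, smul_mulVec, one_mulVec, intCast_det]
        rfl
    _ = _ := by
        rw [funext hk, hadj]
        exact ((Int.castRingHom ℝ).map_mulVec B.adjugate k i).symm

lemma map_one_sub_intCast (M : Matrix (Fin 2) (Fin 2) ℤ) :
    (1 - M).map (Int.cast : ℤ → ℝ) = 1 - M.map Int.cast := by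
  simp [Matrix.map_sub]

lemma intCast_det_one_sub (M : Matrix (Fin 2) (Fin 2) ℤ) :
    (((1 - M).det : ℤ) : ℝ) = ((1 : Matrix (Fin 2) (Fin 2) ℝ) - M.map Int.cast).det := by
  rw [intCast_det, map_one_sub_intCast]

lemma exists_int_det_mul_of_mem_fixSet {M : Matrix (Fin 2) (Fin 2) ℤ} {x : Fin 2 → ℝ}
    (hx : x ∈ fixSet M) (i : Fin 2) : ∃ m : ℤ, ((1 - M).det : ℝ) * x i = m := by
  refine exists_int_det_mul_of_mulVec_int (1 - M) (fun j => ?_) i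
  obtain ⟨k, hk⟩ := hx.2 j
  refine ⟨-k, ?_⟩
  rw [map_one_sub_intCast, sub_mulVec, one_mulVec, Pi.sub_apply, Int.cast_neg, ← hk]
  ring

lemma zero_mem_fixSet (M : Matrix (Fin 2) (Fin 2) ℤ) : 0 ∈ fixSet M :=
  ⟨fun _ => ⟨le_rfl, zero_lt_one⟩, fun _ => ⟨0, by simp⟩⟩

/-- A fixed point has coordinates in `(det (1 - M))⁻¹ ℤ ∩ [0, 1)`. -/
lemma fixSet_finite {M : Matrix (Fin 2) (Fin 2) ℤ} (hM : (1 - M).det ≠ 0) :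
    (fixSet M).Finite := by
  have hd : ((1 - M).det : ℝ) ≠ 0 := Int.cast_ne_zero.mpr hM
  refine ((Set.Finite.pi fun _ : Fin 2 => Set.finite_Icc (-|(1 - M).det|) |(1 - M).det|).image
    fun m i => (m i : ℝ) / (1 - M).det).subset fun x hx => ?_
  choose m hm using exists_int_det_mul_of_mem_fixSet hx
  refine ⟨m, fun i _ => ?_, funext fun i => by simp only [← hm i, mul_div_cancel_left₀ _ hd]⟩
  have h : |(m i : ℝ)| ≤ |((1 - M).det : ℝ)| := by
    rw [← hm, abs_mul]
    exact mul_le_of_le_one_right (abs_nonneg _)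
      (abs_le.mpr ⟨by linarith [(hx.1 i).1], (hx.1 i).2.le⟩)
  exact abs_le.mp (by exact_mod_cast h)

lemma differentiableAt_reLift {ψ : (Fin 2 → ℂ) → (Fin 2 → ℂ)} {x : Fin 2 → ℝ}
    (hψ : DifferentiableAt ℂ ψ (ofRealPi x)) : DifferentiableAt ℝ (reLift ψ) x :=
  (hasFDerivAt_reLift hψ).differentiableAt

lemma reLift_add (ψ₁ ψ₂ : (Fin 2 → ℂ) → (Fin 2 → ℂ)) :
    reLift (ψ₁ + ψ₂) = reLift ψ₁ + reLift ψ₂ := by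
  ext
  simp [reLift]

lemma reLift_ofReal_smul (t : ℝ) (ψ : (Fin 2 → ℂ) → (Fin 2 → ℂ)) :
    reLift (fun z => (t : ℂ) • ψ z) = t • reLift ψ := by
  ext
  simp [reLift]

lemma Jac_add {f g : (Fin 2 → ℝ) → (Fin 2 → ℝ)} {x : Fin 2 → ℝ}
    (hf : DifferentiableAt ℝ f x) (hg : DifferentiableAt ℝ g x) :
    Jac (f + g) x = Jac f x + Jac g x := by
  ext
  simp [Jac, fderiv_add hf hg]

lemma Jac_const_smul (t : ℝ) (f : (Fin 2 → ℝ) → (Fin 2 → ℝ)) (x : Fin 2 → ℝ) :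
    Jac (t • f) x = t • Jac f x := by
  ext
  simp [Jac, fderiv_const_smul_field]

section BM

variable {M : Matrix (Fin 2) (Fin 2) ℤ} {r : ℝ}

lemma BM_eq_sum (hfin : (fixSet M).Finite) (ψ : (Fin 2 → ℂ) → (Fin 2 → ℂ)) :
    BM M ψ = ((1 - M).det.natAbs : ℝ)⁻¹ * ∑ x ∈ hfin.toFinset,
      (((1 : Matrix (Fin 2) (Fin 2) ℝ) - M.map (Int.cast : ℤ → ℝ))⁻¹ * Jac (reLift ψ) x).trace := by
  rw [BM, finsum_mem_eq_finite_toFinset_sum _ hfin]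

lemma BM_add (hfin : (fixSet M).Finite) (hr : 0 < r) {ψ₁ ψ₂ : (Fin 2 → ℂ) → (Fin 2 → ℂ)}
    (h₁ : DifferentiableOn ℂ ψ₁ (strip r)) (h₂ : DifferentiableOn ℂ ψ₂ (strip r)) :
    BM M (ψ₁ + ψ₂) = BM M ψ₁ + BM M ψ₂ := by
  simp only [BM_eq_sum hfin, reLift_add, ← mul_add, ← Finset.sum_add_distrib, ← trace_add]
  congr 1
  refine Finset.sum_congr rfl fun x _ => ?_
  rw [Jac_add (differentiableAt_reLift (h₁.differentiableAt_ofRealPi hr x))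
    (differentiableAt_reLift (h₂.differentiableAt_ofRealPi hr x)), Matrix.mul_add]

lemma BM_ofReal_smul (t : ℝ) (ψ : (Fin 2 → ℂ) → (Fin 2 → ℂ)) :
    BM M (fun z => (t : ℂ) • ψ z) = t * BM M ψ := by
  simp only [BM, reLift_ofReal_smul, Jac_const_smul, Matrix.mul_smul, trace_smul, smul_eq_mul,
    ← mul_finsum_mem]
  ring

lemma exists_abs_BM_le (hfin : (fixSet M).Finite) (hr : 0 < r) :
    ∃ K ≥ 0, ∀ (φ : (Fin 2 → ℂ) → (Fin 2 → ℂ)) (δ : ℝ), DifferentiableOn ℂ φ (strip r) →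
      (∀ z ∈ strip r, ‖φ z‖ ≤ δ) → |BM M φ| ≤ K * δ := by
  set A := (1 : Matrix (Fin 2) (Fin 2) ℝ) - M.map (Int.cast : ℤ → ℝ)
  set S := ∑ i, ∑ j, |A⁻¹ i j|
  refine ⟨((1 - M).det.natAbs : ℝ)⁻¹ * hfin.toFinset.card * S * (2 / r), by positivity,
    fun φ δ hφ hb => ?_⟩
  have htrace : ∀ x, |(A⁻¹ * Jac (reLift φ) x).trace| ≤ S * (2 * δ / r) := fun x =>
    abs_trace_mul_le _ _ fun i j =>
      (abs_Jac_reLift_le (hφ.differentiableAt_ofRealPi hr x) i j).trans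
        (norm_fderiv_ofRealPi_le hr hφ hb x)
  rw [BM_eq_sum hfin, abs_mul, abs_of_nonneg (by positivity)]
  calc _ ≤ ((1 - M).det.natAbs : ℝ)⁻¹ * ∑ _x ∈ hfin.toFinset, S * (2 * δ / r) := by
        gcongr
        exact (Finset.abs_sum_le_sum_abs _ _).trans (Finset.sum_le_sum fun x _ => htrace x)
    _ = _ := by
        rw [Finset.sum_const, nsmul_eq_mul]
        ring

lemma add_mem_pertSpace {ψ₁ ψ₂ : (Fin 2 → ℂ) → (Fin 2 → ℂ)} (h₁ : ψ₁ ∈ pertSpace r)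
    (h₂ : ψ₂ ∈ pertSpace r) : ψ₁ + ψ₂ ∈ pertSpace r := by
  obtain ⟨hd₁, ⟨B₁, hB₁⟩, hp₁, hre₁⟩ := h₁
  obtain ⟨hd₂, ⟨B₂, hB₂⟩, hp₂, hre₂⟩ := h₂
  refine ⟨hd₁.add hd₂, ⟨B₁ + B₂, fun z hz => ?_⟩, fun z k => ?_, fun x i => ?_⟩
  · exact (norm_add_le _ _).trans (add_le_add (hB₁ z hz) (hB₂ z hz))
  · simp [hp₁, hp₂]
  · simp [hre₁, hre₂]

lemma ofReal_smul_mem_pertSpace (t : ℝ) {ψ : (Fin 2 → ℂ) → (Fin 2 → ℂ)}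
    (h : ψ ∈ pertSpace r) : (fun z => (t : ℂ) • ψ z) ∈ pertSpace r := by
  obtain ⟨hd, ⟨B, hB⟩, hp, hre⟩ := h
  refine ⟨hd.fun_const_smul _, ⟨|t| * B, fun z hz => ?_⟩, fun z k => ?_, fun x i => ?_⟩
  · rw [norm_smul, Complex.norm_real, Real.norm_eq_abs]
    exact mul_le_mul_of_nonneg_left (hB z hz) (abs_nonneg t)
  · simp [hp]
  · simp [hre]

lemma exists_abs_BM_sub_lt (hfin : (fixSet M).Finite) (hr : 0 < r)
    {ψ : (Fin 2 → ℂ) → (Fin 2 → ℂ)} (hψ : ψ ∈ pertSpace r) {ε : ℝ} (hε : 0 < ε) :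
    ∃ δ > (0 : ℝ), ∀ ψ' ∈ pertSpace r,
      (∀ z ∈ strip r, ‖ψ' z - ψ z‖ < δ) → |BM M ψ' - BM M ψ| < ε := by
  obtain ⟨K, hK, hbound⟩ := exists_abs_BM_le hfin hr
  refine ⟨ε / (K + 1), by positivity, fun ψ' hψ' hclose => ?_⟩
  have hdiff : DifferentiableOn ℂ (ψ' - ψ) (strip r) := hψ'.1.sub hψ.1
  have hsub : BM M ψ' - BM M ψ = BM M (ψ' - ψ) := by
    rw [sub_eq_iff_eq_add', ← BM_add hfin hr hψ.1 hdiff, add_sub_cancel]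
  calc |BM M ψ' - BM M ψ| ≤ K * (ε / (K + 1)) :=
        hsub ▸ hbound _ _ hdiff fun z hz => (hclose z hz).le
    _ < ε := by
        rw [mul_div_assoc', div_lt_iff₀ (by positivity)]
        nlinarith

lemma exists_BM_ne_zero_near (hfin : (fixSet M).Finite) (hr : 0 < r)
    {ψ₀ : (Fin 2 → ℂ) → (Fin 2 → ℂ)} (hψ₀ : ψ₀ ∈ pertSpace r) (hBψ₀ : BM M ψ₀ ≠ 0)
    {ψ : (Fin 2 → ℂ) → (Fin 2 → ℂ)} (hψ : ψ ∈ pertSpace r) {ε : ℝ} (hε : 0 < ε) :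
    ∃ ψ' ∈ pertSpace r, BM M ψ' ≠ 0 ∧ ∀ z ∈ strip r, ‖ψ' z - ψ z‖ < ε := by
  by_cases hBψ : BM M ψ ≠ 0
  · exact ⟨ψ, hψ, hBψ, fun z _ => by simpa using hε⟩
  obtain ⟨B, hB⟩ := hψ₀.2.1
  set s := ε / (|B| + 1)
  have hs : 0 < s := by positivity
  have hsψ₀ := ofReal_smul_mem_pertSpace s hψ₀
  refine ⟨ψ + fun z => (s : ℂ) • ψ₀ z, add_mem_pertSpace hψ hsψ₀, ?_, fun z hz => ?_⟩
  · rw [BM_add hfin hr hψ.1 hsψ₀.1, BM_ofReal_smul, not_not.mp hBψ, zero_add]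
    exact mul_ne_zero hs.ne' hBψ₀
  · rw [Pi.add_apply, add_sub_cancel_left, norm_smul, Complex.norm_real, Real.norm_of_nonneg hs.le]
    calc s * ‖ψ₀ z‖ ≤ s * |B| := by gcongr; exact (hB z hz).trans (le_abs_self B)
      _ < ε := by
        rw [div_mul_eq_mul_div, div_lt_iff₀ (by positivity)]
        nlinarith

end BM

lemma Complex.norm_sin_le_exp_abs_im (w : ℂ) : ‖Complex.sin w‖ ≤ Real.exp |w.im| := by
  have hexp : ∀ u : ℂ, |u.re| ≤ |w.im| → ‖Complex.exp u‖ ≤ Real.exp |w.im| := fun u hu => by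
    rw [Complex.norm_exp]
    exact Real.exp_le_exp.mpr ((le_abs_self _).trans hu)
  rw [Complex.sin, norm_div, norm_mul, Complex.norm_I, mul_one, Complex.norm_two]
  have := norm_sub_le (Complex.exp (-w * Complex.I)) (Complex.exp (w * Complex.I))
  linarith [hexp (-w * Complex.I) (by simp), hexp (w * Complex.I) (by simp)]

noncomputable def sinPert (a : Fin 2 → ℝ) (c : ℝ) : (Fin 2 → ℂ) → (Fin 2 → ℂ) :=
  fun z i => a i * Complex.sin (c * z 0)

lemma sinPert_mem_pertSpace (a : Fin 2 → ℝ) (n : ℤ) (r : ℝ) :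
    sinPert a (2 * Real.pi * n) ∈ pertSpace r := by
  set c := 2 * Real.pi * n
  refine ⟨Differentiable.differentiableOn (by unfold sinPert; fun_prop),
    ⟨‖a‖ * Real.exp (|c| * r), fun z hz => ?_⟩, fun z k => ?_, fun x i => ?_⟩
  · refine (pi_norm_le_iff_of_nonneg (by positivity)).mpr fun i => ?_
    rw [sinPert, norm_mul, Complex.norm_real]
    refine mul_le_mul (norm_le_pi_norm a i) ((Complex.norm_sin_le_exp_abs_im _).trans ?_)
      (norm_nonneg _) (norm_nonneg _)
    rw [Real.exp_le_exp, Complex.im_ofReal_mul, abs_mul]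
    exact mul_le_mul_of_nonneg_left (hz 0).le (abs_nonneg c)
  · ext i
    have : (c : ℂ) * (z 0 + k 0) = c * z 0 + (n * k 0 : ℤ) * (2 * Real.pi) := by
      push_cast [c]
      ring
    simp only [sinPert, Pi.add_apply, this, Complex.sin_add_int_mul_two_pi]
  · simp only [sinPert, ← Complex.ofReal_mul, ← Complex.ofReal_sin, Complex.ofReal_im]

lemma reLift_sinPert (a : Fin 2 → ℝ) (c : ℝ) :
    reLift (sinPert a c) = fun x => Real.sin (c * x 0) • a := by
  ext x i
  simp only [reLift, sinPert, ← Complex.ofReal_mul, ← Complex.ofReal_sin, Complex.ofReal_re,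
    Pi.smul_apply, smul_eq_mul, mul_comm]

lemma Jac_sinPert (a : Fin 2 → ℝ) (c : ℝ) (x : Fin 2 → ℝ) :
    Jac (reLift (sinPert a c)) x = (c * Real.cos (c * x 0)) • vecMulVec a (Pi.single 0 1) := by
  have hderiv : HasFDerivAt (fun x : Fin 2 → ℝ => Real.sin (c * x 0) • a)
      ((Real.cos (c * x 0) • c • ContinuousLinearMap.proj 0).smulRight a) x :=
    (((hasFDerivAt_apply 0 x).const_mul c).sin).smul_const a
  ext i j
  rw [Jac, of_apply, reLift_sinPert, hderiv.fderiv]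
  by_cases hj : j = 0 <;> simp [vecMulVec_apply, hj, mul_comm, mul_left_comm]

lemma trace_inv_mul_Jac_sinPert {A : Matrix (Fin 2) (Fin 2) ℝ} (hA : A.det ≠ 0) (c : ℝ)
    (x : Fin 2 → ℝ) :
    (A⁻¹ * Jac (reLift (sinPert (A *ᵥ Pi.single 0 1) c)) x).trace = c * Real.cos (c * x 0) := by
  rw [Jac_sinPert, Matrix.mul_smul, mul_vecMulVec, mulVec_mulVec,
    nonsing_inv_mul A (isUnit_iff_ne_zero.mpr hA), one_mulVec, trace_smul, trace_vecMulVec]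
  simp

lemma BM_sinPert_ne_zero {M : Matrix (Fin 2) (Fin 2) ℤ} (hM : (1 - M).det ≠ 0) :
    BM M (sinPert (((1 : Matrix (Fin 2) (Fin 2) ℝ) - M.map Int.cast) *ᵥ Pi.single 0 1)
      (2 * Real.pi * (1 - M).det)) ≠ 0 := by
  set c := 2 * Real.pi * (1 - M).det with hc
  have hfin := fixSet_finite hM
  have hA : ((1 : Matrix (Fin 2) (Fin 2) ℝ) - M.map Int.cast).det ≠ 0 := by
    rw [← intCast_det_one_sub]
    exact_mod_cast hM
  have hterm : ∀ x ∈ hfin.toFinset, (((1 : Matrix (Fin 2) (Fin 2) ℝ) - M.map Int.cast)⁻¹ *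
      Jac (reLift (sinPert (((1 : Matrix (Fin 2) (Fin 2) ℝ) - M.map Int.cast) *ᵥ
        Pi.single 0 1) c)) x).trace = c := fun x hx => by
    obtain ⟨m, hm⟩ := exists_int_det_mul_of_mem_fixSet (hfin.mem_toFinset.mp hx) 0
    have harg : c * x 0 = m * (2 * Real.pi) := by
      rw [hc, ← hm]
      ring
    rw [trace_inv_mul_Jac_sinPert hA, harg, Real.cos_int_mul_two_pi, mul_one]
  have hcard : 0 < hfin.toFinset.card :=
    Finset.card_pos.mpr ⟨0, hfin.mem_toFinset.mpr (zero_mem_fixSet M)⟩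
  rw [BM_eq_sum hfin, Finset.sum_congr rfl hterm, Finset.sum_const, nsmul_eq_mul]
  have hN : (0 : ℝ) < (1 - M).det.natAbs := by exact_mod_cast Int.natAbs_pos.mpr hM
  have hc0 : c ≠ 0 := by positivity
  positivity

theorem BM_generic_nonvanishing_general (r : ℝ) (hr : 0 < r)
    (M : Matrix (Fin 2) (Fin 2) ℤ)
    (hhyp : ((1 : Matrix (Fin 2) (Fin 2) ℝ) - M.map (Int.cast : ℤ → ℝ)).det ≠ 0) :
    -- additivity
    (∀ ψ₁ ∈ pertSpace r, ∀ ψ₂ ∈ pertSpace r, BM M (ψ₁ + ψ₂) = BM M ψ₁ + BM M ψ₂) ∧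
    -- real homogeneity
    (∀ ψ ∈ pertSpace r, ∀ t : ℝ, BM M (fun z => (t : ℂ) • ψ z) = t * BM M ψ) ∧
    -- nonzero
    (∃ ψ ∈ pertSpace r, BM M ψ ≠ 0) ∧
    -- continuity on `ℬ_r`
    (∀ ψ ∈ pertSpace r, ∀ ε > (0 : ℝ), ∃ δ > (0 : ℝ), ∀ ψ' ∈ pertSpace r,
      (∀ z ∈ strip r, ‖ψ' z - ψ z‖ < δ) → |BM M ψ' - BM M ψ| < ε) ∧
    -- `𝒢` is open
    (∀ ψ ∈ pertSpace r, BM M ψ ≠ 0 → ∃ δ > (0 : ℝ), ∀ ψ' ∈ pertSpace r,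
      (∀ z ∈ strip r, ‖ψ' z - ψ z‖ < δ) → BM M ψ' ≠ 0) ∧
    -- `𝒢` is dense
    (∀ ψ ∈ pertSpace r, ∀ ε > (0 : ℝ), ∃ ψ' ∈ pertSpace r,
      BM M ψ' ≠ 0 ∧ ∀ z ∈ strip r, ‖ψ' z - ψ z‖ < ε) := by
  have hM : (1 - M).det ≠ 0 := by
    rw [← intCast_det_one_sub] at hhyp
    exact_mod_cast hhyp
  have hfin := fixSet_finite hM
  have hψ₀ := sinPert_mem_pertSpace (((1 : Matrix (Fin 2) (Fin 2) ℝ) - M.map Int.cast) *ᵥ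
    Pi.single 0 1) (1 - M).det r
  refine ⟨fun ψ₁ h₁ ψ₂ h₂ => BM_add hfin hr h₁.1 h₂.1, fun ψ _ t => BM_ofReal_smul t ψ,
    ⟨_, hψ₀, BM_sinPert_ne_zero hM⟩, fun ψ hψ ε hε => exists_abs_BM_sub_lt hfin hr hψ hε,
    fun ψ hψ hBψ => ?_,
    fun ψ hψ ε hε => exists_BM_ne_zero_near hfin hr hψ₀ (BM_sinPert_ne_zero hM) hψ hε⟩
  obtain ⟨δ, hδ, hclose⟩ := exists_abs_BM_sub_lt hfin hr hψ (abs_pos.mpr hBψ)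
  exact ⟨δ, hδ, fun ψ' hψ' hz hBψ' => by simpa [hBψ'] using hclose ψ' hψ' hz⟩

/-- `B_M` is a nonzero continuous linear functional on `ℬ_r`, and
`𝒢 = B_M⁻¹(ℝ \ {0})` is open and dense in `ℬ_r` (with respect to the sup norm on the
strip). -/
theorem BM_generic_nonvanishing (r : ℝ) (hr : 0 < r)
    (M : Matrix (Fin 2) (Fin 2) ℤ) (hdet : M.det = 1)
    (hhyp : ((1 : Matrix (Fin 2) (Fin 2) ℝ) - M.map (Int.cast : ℤ → ℝ)).det ≠ 0) :
    -- additivity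
    (∀ ψ₁ ∈ pertSpace r, ∀ ψ₂ ∈ pertSpace r, BM M (ψ₁ + ψ₂) = BM M ψ₁ + BM M ψ₂) ∧
    -- real homogeneity
    (∀ ψ ∈ pertSpace r, ∀ t : ℝ, BM M (fun z => (t : ℂ) • ψ z) = t * BM M ψ) ∧
    -- nonzero
    (∃ ψ ∈ pertSpace r, BM M ψ ≠ 0) ∧
    -- continuity on `ℬ_r`
    (∀ ψ ∈ pertSpace r, ∀ ε > (0 : ℝ), ∃ δ > (0 : ℝ), ∀ ψ' ∈ pertSpace r,
      (∀ z ∈ strip r, ‖ψ' z - ψ z‖ < δ) → |BM M ψ' - BM M ψ| < ε) ∧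
    -- `𝒢` is open
    (∀ ψ ∈ pertSpace r, BM M ψ ≠ 0 → ∃ δ > (0 : ℝ), ∀ ψ' ∈ pertSpace r,
      (∀ z ∈ strip r, ‖ψ' z - ψ z‖ < δ) → BM M ψ' ≠ 0) ∧
    -- `𝒢` is dense
    (∀ ψ ∈ pertSpace r, ∀ ε > (0 : ℝ), ∃ ψ' ∈ pertSpace r,
      BM M ψ' ≠ 0 ∧ ∀ z ∈ strip r, ‖ψ' z - ψ z‖ < ε) :=
  BM_generic_nonvanishing_general r hr M hhyp
end
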